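/- arXiv:1208.5197 — 5 statements merged into one kernel-verified Lean document; each statement's English description precedes it below -/
import Mathlib

section
/- Let 1 → N → G → Q → 1 be an exact sequence of groups and A an abelian group with trivial G-action. Then the inflation map Inf : H²(Q, A) → H²(G, A) and the restriction map Res : H²(G, A) → H²(N, A)^Q fit into an exact sequence H¹(G, A) → H¹(N, A)^Q → H²(Q, A) → H²(G, A), i.e. the inflation-restriction exact sequence holds in degree ≤ 2. -/
/-!
Write `g = κ(g) · s(π g)` with `κ(g) ∈ N` (`kerComponent`; `nf` is `factorSet`). For a
`Q`-invariant `χ : N →* A` the identity `κ(gh) = κ(g) · s(π g) κ(h) s(π g)⁻¹ · nf(π g, π h)`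
says that the inflation of the transgression `χ ∘ nf` is the coboundary of `(χ ∘ κ)⁻¹`. Hence
the transgression is a cocycle with trivial inflation, and if `χ ∘ nf = ∂b` on `Q`, then
`g ↦ χ(κ g) · b(π g)` is a homomorphism extending `χ`. Conversely, if the inflation of a cocycle
`c` is `∂b` on `G`, then `b(mg) = b(m) b(g) / b(1)` for `m ∈ N`, so `m ↦ b(1) / b(m)` is a
`Q`-invariant character of `N` whose transgression differs from `c` by the coboundary of `b ∘ s`.
-/

/-- A 2-cocycle with trivial action, written multiplicatively. -/
def IsCocycle2 {Q : Type*} [Group Q] {A : Type*} [CommGroup A] (c : Q → Q → A) : Prop :=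
  ∀ p q r : Q, c q r * c p (q * r) = c (p * q) r * c p q

section Cocycles

variable {Q A : Type*} [Group Q] [CommGroup A]

def coboundary1 (b : Q → A) (p q : Q) : A :=
  b q * (b (p * q))⁻¹ * b p

def IsCoboundary2 (c : Q → Q → A) : Prop :=
  ∃ b : Q → A, ∀ p q : Q, c p q = coboundary1 b p q

theorem IsCoboundary2.isCocycle2 {c : Q → Q → A} (hc : IsCoboundary2 c) : IsCocycle2 c := by
  obtain ⟨b, hb⟩ := hc
  intro p q r
  simp only [hb, coboundary1, mul_assoc]
  apply Additive.ofMul.injective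
  simp only [ofMul_mul, ofMul_inv]
  abel

theorem IsCocycle2.map_one_left {c : Q → Q → A} (hc : IsCocycle2 c) (r : Q) : c 1 r = c 1 1 := by
  simpa using hc 1 1 r

theorem IsCocycle2.map_one_right {c : Q → Q → A} (hc : IsCocycle2 c) (p : Q) :
    c p 1 = c 1 1 := by
  simpa [mul_comm] using (hc p 1 1).symm

theorem IsCocycle2.of_comp {G : Type*} [Group G] {π : G →* Q} (hπ : Function.Surjective π)
    {c : Q → Q → A} (hc : IsCocycle2 fun g h => c (π g) (π h)) : IsCocycle2 c :=
  hπ.forall₃.2 fun g h k => by simpa only [map_mul] using hc g h k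

end Cocycles

section Transgression

variable {G Q A : Type*} [Group G] [Group Q] [CommGroup A]

def IsConjInvariant {N : Subgroup G} [hN : N.Normal] (χ : N →* A) : Prop :=
  ∀ (m : N) (g : G), χ ⟨g⁻¹ * m * g, hN.conj_mem' m m.2 g⟩ = χ m

theorem IsConjInvariant.map_conj {N : Subgroup G} [hN : N.Normal] {χ : N →* A}
    (hχ : IsConjInvariant χ) (m : N) (g : G) : χ ⟨g * m * g⁻¹, hN.conj_mem m m.2 g⟩ = χ m := by
  simpa using hχ m g⁻¹

variable (π : G →* Q) {s : Q → G} (hs : ∀ q, π (s q) = q)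

def kerComponent (g : G) : π.ker := ⟨g * (s (π g))⁻¹, by simp [hs]⟩

def factorSet (p q : Q) : π.ker := ⟨s p * s q * (s (p * q))⁻¹, by simp [hs]⟩

theorem kerComponent_mul_of_mem (m : π.ker) (g : G) :
    kerComponent π hs (m * g) = m * kerComponent π hs g :=
  Subtype.ext <| by simp [kerComponent, π.mem_ker.1 m.2, mul_assoc]

theorem IsConjInvariant.map_kerComponent_mul {χ : π.ker →* A} (hχ : IsConjInvariant χ)
    (g h : G) :
    χ (kerComponent π hs (g * h)) =
      χ (kerComponent π hs g) * χ (kerComponent π hs h) * χ (factorSet π hs (π g) (π h)) := by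
  have hsplit : kerComponent π hs (g * h) =
      kerComponent π hs g *
        ⟨s (π g) * kerComponent π hs h * (s (π g))⁻¹,
          π.normal_ker.conj_mem _ (kerComponent π hs h).2 _⟩ *
        factorSet π hs (π g) (π h) :=
    Subtype.ext <| by simp only [kerComponent, factorSet, map_mul, Subgroup.coe_mul]; group
  rw [hsplit, map_mul, map_mul, hχ.map_conj]

theorem isCoboundary2_map_factorSet (f : G →* A) :
    IsCoboundary2 fun p q => f (factorSet π hs p q : G) :=
  ⟨f ∘ s, fun p q => by
    simp only [factorSet, coboundary1, map_mul, map_inv, Function.comp_apply]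
    rw [mul_comm (f (s p)), mul_right_comm]⟩

theorem IsConjInvariant.exists_extension {χ : π.ker →* A} (hχ : IsConjInvariant χ)
    (htg : IsCoboundary2 fun p q => χ (factorSet π hs p q)) :
    ∃ f : G →* A, ∀ m : π.ker, f m = χ m := by
  obtain ⟨b, hb⟩ := htg
  let f : G →* A := MonoidHom.mk' (fun g => χ (kerComponent π hs g) * b (π g)) fun g h => by
    simp only [hχ.map_kerComponent_mul, hb, coboundary1, map_mul]
    simp [mul_comm, mul_left_comm, mul_assoc]
  refine ⟨f, fun m => ?_⟩
  have hm := kerComponent_mul_of_mem π hs m 1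
  rw [mul_one] at hm
  calc f m = χ m * f 1 := by
        simp only [f, MonoidHom.mk'_apply, hm, map_mul, π.mem_ker.1 m.2, π.map_one, mul_assoc]
    _ = χ m := by rw [map_one, mul_one]

theorem IsConjInvariant.isCoboundary2_inflation_transgression {χ : π.ker →* A}
    (hχ : IsConjInvariant χ) : IsCoboundary2 fun g h : G => χ (factorSet π hs (π g) (π h)) :=
  ⟨fun g => (χ (kerComponent π hs g))⁻¹, fun g h => by
    simp [coboundary1, hχ.map_kerComponent_mul, mul_comm, mul_left_comm, mul_assoc]⟩

theorem IsConjInvariant.isCocycle2_transgression {χ : π.ker →* A} (hχ : IsConjInvariant χ) :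
    IsCocycle2 fun p q => χ (factorSet π hs p q) :=
  IsCocycle2.of_comp (Function.LeftInverse.surjective hs)
    (hχ.isCoboundary2_inflation_transgression π hs).isCocycle2

end Transgression

section Inflation

variable {G Q A : Type*} [Group G] [Group Q] [CommGroup A] (π : G →* Q) {c : Q → Q → A}
  {b : G → A}

theorem cochain_mul (hb : ∀ g h : G, c (π g) (π h) = coboundary1 b g h) (g h : G) :
    b (g * h) = b g * b h / c (π g) (π h) := by
  rw [hb, coboundary1]
  apply Additive.ofMul.injective
  simp only [ofMul_mul, ofMul_inv, ofMul_div]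
  abel

theorem cochain_one (hb : ∀ g h : G, c (π g) (π h) = coboundary1 b g h) :
    b 1 = c 1 1 := by
  simpa [coboundary1] using (hb 1 1).symm

theorem cochain_mul_of_mem_ker_left (hc : IsCocycle2 c)
    (hb : ∀ g h : G, c (π g) (π h) = coboundary1 b g h) {m : G} (hm : π m = 1) (g : G) :
    b (m * g) = b m * b g / b 1 := by
  rw [cochain_mul π hb, hm, hc.map_one_left, cochain_one π hb]

theorem cochain_mul_of_mem_ker_right (hc : IsCocycle2 c)
    (hb : ∀ g h : G, c (π g) (π h) = coboundary1 b g h) {m : G} (hm : π m = 1) (g : G) :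
    b (g * m) = b g * b m / b 1 := by
  rw [cochain_mul π hb, hm, hc.map_one_right, cochain_one π hb]

theorem cochain_conj_of_mem_ker (hc : IsCocycle2 c)
    (hb : ∀ g h : G, c (π g) (π h) = coboundary1 b g h) {m : G} (hm : π m = 1) (g : G) :
    b (g⁻¹ * m * g) = b m := by
  have hinv := cochain_mul π hb g⁻¹ g
  rw [inv_mul_cancel] at hinv
  rw [cochain_mul π hb, cochain_mul_of_mem_ker_right π hc hb hm, map_mul, hm, mul_one, hinv]
  apply Additive.ofMul.injective
  simp only [ofMul_mul, ofMul_div]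
  abel

theorem exists_isConjInvariant_eq_factorSet_mul {s : Q → G} (hs : ∀ q, π (s q) = q)
    (hc : IsCocycle2 c) (hb : ∀ g h : G, c (π g) (π h) = coboundary1 b g h) :
    ∃ χ : π.ker →* A, IsConjInvariant χ ∧ ∃ b' : Q → A, ∀ p q : Q,
      c p q = χ (factorSet π hs p q) * coboundary1 b' p q := by
  let χ : π.ker →* A := MonoidHom.mk' (fun m => b 1 / b m) fun m n => by
    rw [Subgroup.coe_mul, cochain_mul_of_mem_ker_left π hc hb (π.mem_ker.1 m.2)]
    apply Additive.ofMul.injective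
    simp only [ofMul_mul, ofMul_div]
    abel
  refine ⟨χ, fun m g => ?_, b ∘ s, fun p q => ?_⟩
  · show b 1 / b (g⁻¹ * m * g) = b 1 / b m
    rw [cochain_conj_of_mem_ker π hc hb (π.mem_ker.1 m.2)]
  · have hsplit : s p * s q = factorSet π hs p q * s (p * q) := by simp [factorSet]
    have h := hb (s p) (s q)
    rw [hs, hs, coboundary1, hsplit,
      cochain_mul_of_mem_ker_left π hc hb (π.mem_ker.1 (factorSet π hs p q).2)] at h
    rw [h]
    show _ = b 1 / b (factorSet π hs p q) * (b (s q) * (b (s (p * q)))⁻¹ * b (s p))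
    apply Additive.ofMul.injective
    simp only [ofMul_mul, ofMul_div, ofMul_inv]
    abel

end Inflation

/-- the inflation-restriction exact sequence in degree ≤ 2 for a trivial
module `A`: `H¹(G,A) → H¹(N,A)^Q → H²(Q,A) → H²(G,A)` is exact, where `1 → N → G → Q → 1`
is exact, the transgression is defined via a section `s` of `π : G → Q` with factor set
`nf p q = s(p)s(q)s(pq)⁻¹ ∈ N`. -/
theorem stmt1 {G Q : Type*} [Group G] [Group Q] {A : Type*} [CommGroup A]
    (π : G →* Q)
    (N : Subgroup G) (hN : π.ker = N)
    (s : Q → G) (hs : ∀ q : Q, π (s q) = q)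
    (nf : Q → Q → N) (hnf : ∀ p q : Q, ((nf p q : N) : G) = s p * s q * (s (p * q))⁻¹) :
    -- the restriction of a hom G → A to N is Q-invariant, and its transgression is a
    -- coboundary (exactness: im(res) ⊆ ker(tg)):
    (∀ f : G →* A,
      (∀ (m : N) (g : G), f (g⁻¹ * (m : G) * g) = f (m : G)) ∧
      ∃ b : Q → A, ∀ p q : Q, f ((nf p q : N) : G) = b q * (b (p * q))⁻¹ * b p) ∧
    -- ker(tg) ⊆ im(res): an invariant hom with transgression a coboundary extends to G:
    (∀ χ : N →* A, (∀ (m : N) (g : G), χ ⟨g⁻¹ * (m : G) * g, by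
          have : ((m : G) ∈ π.ker) := hN ▸ m.2
          simp [← hN, MonoidHom.mem_ker] at this ⊢
          simp [this]⟩ = χ m) →
      (∃ b : Q → A, ∀ p q : Q, χ (nf p q) = b q * (b (p * q))⁻¹ * b p) →
      ∃ f : G →* A, ∀ m : N, f (m : G) = χ m) ∧
    -- the transgression of an invariant hom is a 2-cocycle on Q whose inflation to G is
    -- a coboundary (exactness: im(tg) ⊆ ker(Inf)):
    (∀ χ : N →* A, (∀ (m : N) (g : G), χ ⟨g⁻¹ * (m : G) * g, by
          have : ((m : G) ∈ π.ker) := hN ▸ m.2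
          simp [← hN, MonoidHom.mem_ker] at this ⊢
          simp [this]⟩ = χ m) →
      IsCocycle2 (fun p q => χ (nf p q)) ∧
      ∃ b : G → A, ∀ g h : G, χ (nf (π g) (π h)) = b h * (b (g * h))⁻¹ * b g) ∧
    -- ker(Inf) ⊆ im(tg): a 2-cocycle on Q inflating to a coboundary on G is, modulo a
    -- coboundary on Q, the transgression of an invariant hom:
    (∀ c : Q → Q → A, IsCocycle2 c →
      (∃ b : G → A, ∀ g h : G, c (π g) (π h) = b h * (b (g * h))⁻¹ * b g) →
      ∃ χ : N →* A, (∀ (m : N) (g : G), χ ⟨g⁻¹ * (m : G) * g, by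
          have : ((m : G) ∈ π.ker) := hN ▸ m.2
          simp [← hN, MonoidHom.mem_ker] at this ⊢
          simp [this]⟩ = χ m) ∧
        ∃ b' : Q → A, ∀ p q : Q,
          c p q = χ (nf p q) * (b' q * (b' (p * q))⁻¹ * b' p)) := by
  subst hN
  obtain rfl : nf = factorSet π hs := funext₂ fun p q => Subtype.ext (hnf p q)
  exact ⟨fun f => ⟨fun m g => by rw [map_mul, map_mul, mul_right_comm, map_inv, inv_mul_cancel,
      one_mul], isCoboundary2_map_factorSet π hs f⟩,
    fun χ hχ htg => IsConjInvariant.exists_extension π hs hχ htg,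
    fun χ hχ => ⟨IsConjInvariant.isCocycle2_transgression π hs hχ,
      IsConjInvariant.isCoboundary2_inflation_transgression π hs hχ⟩,
    fun c hc ⟨b, hb⟩ => exists_isConjInvariant_eq_factorSet_mul π hs hc hb⟩
end

section
/- Let M be a factor and α : G → Out(M) a homomorphism (an outer action). Choose a lift a_g ∈ Aut(M) of α_g for each g with a_e = id. Then there exist unitaries u(g,h) ∈ U(M) with a_g a_h = Ad(u(g,h)) a_{gh}, and the expression Ob(α)(g,h,k) := u(g,h) u(gh,k) (a_g(u(h,k)) u(g,hk))⁻¹ lies in the center T of U(M) and defines a 3-cocycle on G with values in T whose class in H³(G, T) is independent of all choices. This class Ob(α) (the obstruction) vanishes if and only if α lifts to a cocycle crossed action realizable as a genuine action after perturbation, i.e. iff α admits a lift to a homomorphism-up-to-coboundary. -/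
/-- `(a, u)` is a lifting pair for the outer action `α : G → A ⧸ I`, `I = Ad.range`. -/
def LiftPair {U A G : Type*} [Group U] [Group A] [Group G]
    (Ad : U →* A) (α : G → A ⧸ Ad.range) (a : G → A) (u : G → G → U) : Prop :=
  a 1 = 1 ∧ (∀ g : G, (QuotientGroup.mk (a g) : A ⧸ Ad.range) = α g) ∧
    ∀ g h : G, a g * a h = Ad (u g h) * a (g * h)

/-- The obstruction `Ob(α)(g,h,k) = u(g,h) u(gh,k) (a_g(u(h,k)) u(g,hk))⁻¹`. -/
def obstr {U A G : Type*} [Group U] [Group A] [Group G]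
    (φ : A →* MulAut U) (a : G → A) (u : G → G → U) : G → G → G → U :=
  fun g h k => u g h * u (g * h) k * (φ (a g) (u h k) * u g (h * k))⁻¹

/-- The 3-coboundary of `c : G × G → T` (trivial action), in multiplicative notation. -/
def cob3 {U G : Type*} [Group U] [Group G] (c : G → G → U) : G → G → G → U :=
  fun g h k => c h k * (c (g * h) k)⁻¹ * c g (h * k) * (c g h)⁻¹

/-! Since `Ad (u g h) = a g * a h * (a (g * h))⁻¹`, the obstruction is killed by `Ad`, so it is
central. Expanding `u g h * u (g * h) k * u (g * h * k) l` along the two bracketings of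
`g h k l` gives the 3-cocycle identity. Two lifts of `α` differ by `a g ↦ Ad (v g) * a g`; this
replaces `u` by `perturb φ a u v`, which only conjugates the obstruction, and the remaining
freedom is a central 2-cochain `c`, which changes the obstruction by the coboundary of `c`.
Hence the class is well defined, and it vanishes iff some choice of `u` has trivial
obstruction, i.e. satisfies the cocycle identity. -/

section Obstruction

variable {U A G : Type*} [Group U] [Group A] [Group G] {Ad : U →* A} {φ : A →* MulAut U}
  {a : G → A} {u : G → G → U}

theorem exists_mul_eq_ad_mul [Ad.range.Normal] {b b' : A} (h : (b : A ⧸ Ad.range) = b') :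
    ∃ v : U, b = Ad v * b' := by
  have hmem : b * b'⁻¹ ∈ Ad.range := by
    rw [← QuotientGroup.eq_one_iff, QuotientGroup.mk_mul, QuotientGroup.mk_inv, h,
      mul_inv_cancel]
  obtain ⟨v, hv⟩ := hmem
  exact ⟨v, by rw [hv, inv_mul_cancel_right]⟩

theorem exists_liftPair [Ad.range.Normal] (α : G →* A ⧸ Ad.range) :
    ∃ a u, LiftPair Ad α a u := by
  set a : G → A := fun g => (α g).out * (α 1).out⁻¹
  have ha : ∀ g, (a g : A ⧸ Ad.range) = α g := fun g => by
    simp only [a, QuotientGroup.mk_mul, QuotientGroup.mk_inv, QuotientGroup.out_eq', map_one,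
      inv_one, mul_one]
  have hu : ∀ g h : G, ∃ x : U, a g * a h = Ad x * a (g * h) := fun g h =>
    exists_mul_eq_ad_mul (by rw [QuotientGroup.mk_mul, ha, ha, ha, map_mul])
  choose u hu using hu
  exact ⟨a, u, mul_inv_cancel _, ha, hu⟩

theorem obstr_eq_one_iff {g h k : G} :
    obstr φ a u g h k = 1 ↔ u g h * u (g * h) k = φ (a g) (u h k) * u g (h * k) :=
  mul_inv_eq_one

theorem obstr_mem_ker (hcomp : ∀ (b : A) (v : U), Ad (φ b v) = b * Ad v * b⁻¹)
    (hu : ∀ g h, a g * a h = Ad (u g h) * a (g * h)) (g h k : G) :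
    obstr φ a u g h k ∈ Ad.ker := by
  have hAd : ∀ g h, Ad (u g h) = a g * a h * (a (g * h))⁻¹ := fun g h =>
    eq_mul_inv_of_mul_eq (hu g h).symm
  rw [MonoidHom.mem_ker]
  simp only [obstr, map_mul, map_inv, hcomp, hAd, mul_assoc g h k]
  group

theorem mul_inv_mem_ker {w : G → G → U} (hu : ∀ g h, a g * a h = Ad (u g h) * a (g * h))
    (hw : ∀ g h, a g * a h = Ad (w g h) * a (g * h)) (g h : G) :
    u g h * (w g h)⁻¹ ∈ Ad.ker := by
  rw [MonoidHom.mem_ker, map_mul, map_inv, mul_inv_eq_one]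
  exact mul_right_cancel ((hu g h).symm.trans (hw g h))

theorem apply_apply_eq_conj (hAdconj : ∀ v w : U, φ (Ad v) w = v * w * v⁻¹)
    (hu : ∀ g h, a g * a h = Ad (u g h) * a (g * h)) (g h : G) (x : U) :
    φ (a g) (φ (a h) x) = u g h * φ (a (g * h)) x * (u g h)⁻¹ := by
  rw [← MulAut.mul_apply, ← map_mul, hu, map_mul, MulAut.mul_apply, hAdconj]

theorem obstr_twist (hfix : ∀ (b : A) (t : U), t ∈ Ad.ker → φ b t = t)
    (hcent : ∀ t ∈ Ad.ker, ∀ v : U, t * v = v * t) {d : G → G → U}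
    (hd : ∀ g h, d g h ∈ Ad.ker) (g h k : G) :
    obstr φ a (fun g h => d g h * u g h) g h k * cob3 d g h k = obstr φ a u g h k := by
  have hc : ∀ g h v, Commute (d g h) v := fun g h => hcent _ (hd g h)
  simp only [obstr, cob3, map_mul, hfix _ _ (hd h k)]
  -- regroup so that each surviving factor of `d` acts by conjugation, trivially as it is central
  calc _ = d g h * (u g h * (d (g * h) k * (u (g * h) k * (u g (h * k))⁻¹ *
          ((d g (h * k))⁻¹ * ((φ (a g) (u h k))⁻¹ * (d (g * h) k)⁻¹) *
            (d g (h * k))⁻¹⁻¹)))) * (d g h)⁻¹ := by group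
    _ = u g h * (d (g * h) k * (u (g * h) k * (u g (h * k))⁻¹ * (φ (a g) (u h k))⁻¹) *
          (d (g * h) k)⁻¹) := by
        rw [((hc _ _ _).inv_left).mul_inv_cancel, (hc _ _ _).mul_inv_cancel]
        group
    _ = _ := by rw [(hc _ _ _).mul_inv_cancel]; group

theorem mul_eq_mul_obstr (hcomp : ∀ (b : A) (v : U), Ad (φ b v) = b * Ad v * b⁻¹)
    (hcent : ∀ t ∈ Ad.ker, ∀ v : U, t * v = v * t)
    (hu : ∀ g h, a g * a h = Ad (u g h) * a (g * h)) (g h k : G) :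
    u g h * u (g * h) k = φ (a g) (u h k) * u g (h * k) * obstr φ a u g h k := by
  rw [← hcent _ (obstr_mem_ker hcomp hu g h k), obstr, inv_mul_cancel_right]

theorem obstr_cocycle (hcomp : ∀ (b : A) (v : U), Ad (φ b v) = b * Ad v * b⁻¹)
    (hfix : ∀ (b : A) (t : U), t ∈ Ad.ker → φ b t = t)
    (hcent : ∀ t ∈ Ad.ker, ∀ v : U, t * v = v * t)
    (hAdconj : ∀ v w : U, φ (Ad v) w = v * w * v⁻¹)
    (hu : ∀ g h, a g * a h = Ad (u g h) * a (g * h)) (g h k l : G) :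
    obstr φ a u h k l * obstr φ a u g (h * k) l * obstr φ a u g h k =
      obstr φ a u (g * h) k l * obstr φ a u g h (k * l) := by
  set ω := obstr φ a u
  have hker : ∀ g h k, ω g h k ∈ Ad.ker := obstr_mem_ker hcomp hu
  have hω : ∀ g h k v, Commute (ω g h k) v := fun g h k => hcent _ (hker g h k)
  have hR : ∀ g h k, u g h * u (g * h) k = φ (a g) (u h k) * u g (h * k) * ω g h k :=
    mul_eq_mul_obstr hcomp hcent hu
  have way₁ : u g h * u (g * h) k * u (g * h * k) l =
      φ (a g) (φ (a h) (u k l)) * φ (a g) (u h (k * l)) * u g (h * (k * l)) *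
        (ω h k l * ω g (h * k) l * ω g h k) := calc
    _ = φ (a g) (u h k) * u g (h * k) * ω g h k * u (g * (h * k)) l := by
        rw [hR g h k, mul_assoc g h k]
    _ = φ (a g) (u h k) * (u g (h * k) * u (g * (h * k)) l) * ω g h k := by
        rw [mul_assoc _ (ω g h k), (hω g h k _).eq]; group
    _ = φ (a g) (u h k) * (φ (a g) (u (h * k) l) * u g (h * k * l) * ω g (h * k) l) *
          ω g h k := by rw [hR g (h * k) l]
    _ = φ (a g) (u h k * u (h * k) l) * u g (h * k * l) * (ω g (h * k) l * ω g h k) := by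
        rw [map_mul]; group
    _ = φ (a g) (φ (a h) (u k l) * u h (k * l)) * ω h k l * u g (h * (k * l)) *
          (ω g (h * k) l * ω g h k) := by
        rw [hR h k l, map_mul _ _ (ω h k l), hfix _ _ (hker h k l), mul_assoc h k l]
    _ = _ := by
        rw [mul_assoc _ (ω h k l), (hω h k l _).eq, map_mul]; group
  have way₂ : u g h * u (g * h) k * u (g * h * k) l =
      φ (a g) (φ (a h) (u k l)) * φ (a g) (u h (k * l)) * u g (h * (k * l)) *
        (ω (g * h) k l * ω g h (k * l)) := calc
    _ = u g h * φ (a (g * h)) (u k l) * u (g * h) (k * l) * ω (g * h) k l := by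
        rw [mul_assoc (u g h), hR (g * h) k l]; group
    _ = φ (a g) (φ (a h) (u k l)) * (u g h * u (g * h) (k * l)) * ω (g * h) k l := by
        rw [apply_apply_eq_conj hAdconj hu]; group
    _ = φ (a g) (φ (a h) (u k l)) * (φ (a g) (u h (k * l)) * u g (h * (k * l)) *
          ω g h (k * l)) * ω (g * h) k l := by rw [hR g h (k * l)]
    _ = _ := by
        rw [← (hω g h (k * l) (ω (g * h) k l)).eq]; group
  exact mul_left_cancel (way₁.symm.trans way₂)

/-- The 2-cochain attached to the lift `g ↦ Ad (v g) * a g` of the same outer action. -/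
def perturb (φ : A →* MulAut U) (a : G → A) (u : G → G → U) (v : G → U) : G → G → U :=
  fun g h => v g * φ (a g) (v h) * u g h * (v (g * h))⁻¹

theorem perturb_spec (hcomp : ∀ (b : A) (v : U), Ad (φ b v) = b * Ad v * b⁻¹)
    (hu : ∀ g h, a g * a h = Ad (u g h) * a (g * h)) (v : G → U) (g h : G) :
    Ad (v g) * a g * (Ad (v h) * a h) =
      Ad (perturb φ a u v g h) * (Ad (v (g * h)) * a (g * h)) := by
  have hAd : Ad (perturb φ a u v g h) * Ad (v (g * h)) =
      Ad (v g) * a g * Ad (v h) * (a g)⁻¹ * Ad (u g h) := by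
    simp only [perturb, map_mul, map_inv, hcomp]
    group
  rw [← mul_assoc (Ad _), hAd, mul_assoc _ (Ad (u g h)), ← hu]
  group

theorem obstr_perturb (hcomp : ∀ (b : A) (v : U), Ad (φ b v) = b * Ad v * b⁻¹)
    (hcent : ∀ t ∈ Ad.ker, ∀ v : U, t * v = v * t)
    (hAdconj : ∀ v w : U, φ (Ad v) w = v * w * v⁻¹)
    (hu : ∀ g h, a g * a h = Ad (u g h) * a (g * h)) (v : G → U) (g h k : G) :
    obstr φ (fun g => Ad (v g) * a g) (perturb φ a u v) g h k = obstr φ a u g h k := by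
  set C := v g * φ (a g) (v h) * φ (a g) (φ (a h) (v k))
  have hconj : obstr φ (fun g => Ad (v g) * a g) (perturb φ a u v) g h k =
      C * obstr φ a u g h k * C⁻¹ := by
    simp only [C, obstr, perturb, map_mul, map_inv, MulAut.mul_apply, hAdconj,
      apply_apply_eq_conj hAdconj hu g h, mul_assoc g h k]
    group
  exact hconj.trans
    (Commute.mul_inv_cancel (Commute.symm (hcent _ (obstr_mem_ker hcomp hu g h k) C)))

theorem LiftPair.ker_mul {α : G → A ⧸ Ad.range} {c : G → G → U} (hL : LiftPair Ad α a u)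
    (hc : ∀ g h, c g h ∈ Ad.ker) : LiftPair Ad α a (fun g h => c g h * u g h) :=
  ⟨hL.1, hL.2.1, fun g h => by rw [map_mul, MonoidHom.mem_ker.mp (hc g h), one_mul, hL.2.2]⟩

theorem exists_obstr_eq_obstr_mul_cob3 [Ad.range.Normal] {α : G → A ⧸ Ad.range}
    (hcomp : ∀ (b : A) (v : U), Ad (φ b v) = b * Ad v * b⁻¹)
    (hfix : ∀ (b : A) (t : U), t ∈ Ad.ker → φ b t = t)
    (hcent : ∀ t ∈ Ad.ker, ∀ v : U, t * v = v * t)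
    (hAdconj : ∀ v w : U, φ (Ad v) w = v * w * v⁻¹)
    {a' : G → A} {u' : G → G → U} (hL : LiftPair Ad α a u) (hL' : LiftPair Ad α a' u') :
    ∃ c : G → G → U, (∀ g h, c g h ∈ Ad.ker) ∧
      ∀ g h k, obstr φ a' u' g h k = obstr φ a u g h k * cob3 c g h k := by
  choose v hv using fun g => exists_mul_eq_ad_mul ((hL.2.1 g).trans (hL'.2.1 g).symm)
  obtain rfl : a = fun g => Ad (v g) * a' g := funext hv
  have hc := mul_inv_mem_ker hL.2.2 (perturb_spec hcomp hL'.2.2 v)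
  refine ⟨fun g h => u g h * (perturb φ a' u' v g h)⁻¹, hc, fun g h k => ?_⟩
  rw [← obstr_perturb hcomp hcent hAdconj hL'.2.2 v, ← obstr_twist hfix hcent hc]
  simp only [inv_mul_cancel_right]

theorem exists_cob3_eq_obstr_iff [Ad.range.Normal] {α : G → A ⧸ Ad.range}
    (hcomp : ∀ (b : A) (v : U), Ad (φ b v) = b * Ad v * b⁻¹)
    (hfix : ∀ (b : A) (t : U), t ∈ Ad.ker → φ b t = t)
    (hcent : ∀ t ∈ Ad.ker, ∀ v : U, t * v = v * t)
    (hAdconj : ∀ v w : U, φ (Ad v) w = v * w * v⁻¹) (hL : LiftPair Ad α a u) :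
    (∃ c : G → G → U, (∀ g h, c g h ∈ Ad.ker) ∧
        ∀ g h k, obstr φ a u g h k = cob3 c g h k) ↔
      ∃ (a' : G → A) (u' : G → G → U), LiftPair Ad α a' u' ∧
        ∀ g h k, u' g h * u' (g * h) k = φ (a' g) (u' h k) * u' g (h * k) := by
  constructor
  · rintro ⟨c, hc, hobstr⟩
    refine ⟨a, fun g h => c g h * u g h, hL.ker_mul hc, fun g h k => ?_⟩
    refine (obstr_eq_one_iff (φ := φ) (a := a) (u := fun g h => c g h * u g h)).mp
      (mul_right_cancel (b := cob3 c g h k) ?_)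
    rw [obstr_twist hfix hcent hc, hobstr, one_mul]
  · rintro ⟨a', u', hL', hcocycle⟩
    obtain ⟨c, hc, hobstr⟩ :=
      exists_obstr_eq_obstr_mul_cob3 hcomp hfix hcent hAdconj hL' hL
    exact ⟨c, hc, fun g h k => by rw [hobstr, obstr_eq_one_iff.mpr (hcocycle g h k), one_mul]⟩

end Obstruction

theorem stmt3_general {U A G : Type*} [Group U] [Group A] [Group G]
    (Ad : U →* A) (φ : A →* MulAut U)
    (hcomp : ∀ (a : A) (v : U), Ad (φ a v) = a * Ad v * a⁻¹)
    (hfix : ∀ (a : A) (t : U), t ∈ Ad.ker → φ a t = t)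
    (hcent : ∀ t ∈ Ad.ker, ∀ v : U, t * v = v * t)
    (hAdconj : ∀ v w : U, φ (Ad v) w = v * w * v⁻¹)
    [hnor : Ad.range.Normal]
    (α : G →* A ⧸ Ad.range) :
    -- a lifting pair exists:
    (∃ (a : G → A) (u : G → G → U), LiftPair Ad α a u) ∧
    -- for any lifting pair, the obstruction is a T-valued 3-cocycle, and its class in
    -- H³(G, T) does not depend on the choice of the lifting pair:
    (∀ (a : G → A) (u : G → G → U), LiftPair Ad α a u →
      (∀ g h k : G, obstr φ a u g h k ∈ Ad.ker) ∧
      (∀ g h k l : G,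
        obstr φ a u h k l * obstr φ a u g (h * k) l * obstr φ a u g h k =
          obstr φ a u (g * h) k l * obstr φ a u g h (k * l)) ∧
      (∀ (a' : G → A) (u' : G → G → U), LiftPair Ad α a' u' →
        ∃ c : G → G → U, (∀ g h : G, c g h ∈ Ad.ker) ∧
          ∀ g h k : G, obstr φ a' u' g h k = obstr φ a u g h k * cob3 c g h k)) ∧
    -- the obstruction class vanishes iff α lifts to a genuine cocycle crossed action:
    (∀ (a : G → A) (u : G → G → U), LiftPair Ad α a u →
      ((∃ c : G → G → U, (∀ g h : G, c g h ∈ Ad.ker) ∧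
          ∀ g h k : G, obstr φ a u g h k = cob3 c g h k) ↔
        ∃ (a' : G → A) (u' : G → G → U), LiftPair Ad α a' u' ∧
          ∀ g h k : G,
            u' g h * u' (g * h) k = φ (a' g) (u' h k) * u' g (h * k))) :=
  ⟨exists_liftPair α,
    fun _ _ hL => ⟨obstr_mem_ker hcomp hL.2.2, obstr_cocycle hcomp hfix hcent hAdconj hL.2.2,
      fun _ _ hL' => exists_obstr_eq_obstr_mul_cob3 hcomp hfix hcent hAdconj hL hL'⟩,
    fun _ _ hL => exists_cob3_eq_obstr_iff hcomp hfix hcent hAdconj hL⟩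

/-- the obstruction of an outer action `α : G → A/I` is a well-defined class
in `H³(G, T)` (`T = ker Ad`, central), independent of all choices, and it vanishes iff
`α` lifts to a genuine cocycle crossed action. -/
theorem stmt3 {U A G : Type*} [Group U] [Group A] [Group G]
    (Ad : U →* A) (φ : A →* MulAut U)
    (hcomp : ∀ (a : A) (v : U), Ad (φ a v) = a * Ad v * a⁻¹)
    (hfix : ∀ (a : A) (t : U), t ∈ Ad.ker → φ a t = t)
    (hcent : ∀ t ∈ Ad.ker, ∀ v : U, t * v = v * t)
    (hAdconj : ∀ v w : U, φ (Ad v) w = v * w * v⁻¹)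
    (hfactor : Ad.ker = Subgroup.center U)
    [hnor : Ad.range.Normal]
    (α : G →* A ⧸ Ad.range) :
    -- a lifting pair exists:
    (∃ (a : G → A) (u : G → G → U), LiftPair Ad α a u) ∧
    -- for any lifting pair, the obstruction is a T-valued 3-cocycle, and its class in
    -- H³(G, T) does not depend on the choice of the lifting pair:
    (∀ (a : G → A) (u : G → G → U), LiftPair Ad α a u →
      (∀ g h k : G, obstr φ a u g h k ∈ Ad.ker) ∧
      (∀ g h k l : G,
        obstr φ a u h k l * obstr φ a u g (h * k) l * obstr φ a u g h k =
          obstr φ a u (g * h) k l * obstr φ a u g h (k * l)) ∧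
      (∀ (a' : G → A) (u' : G → G → U), LiftPair Ad α a' u' →
        ∃ c : G → G → U, (∀ g h : G, c g h ∈ Ad.ker) ∧
          ∀ g h k : G, obstr φ a' u' g h k = obstr φ a u g h k * cob3 c g h k)) ∧
    -- the obstruction class vanishes iff α lifts to a genuine cocycle crossed action:
    (∀ (a : G → A) (u : G → G → U), LiftPair Ad α a u →
      ((∃ c : G → G → U, (∀ g h : G, c g h ∈ Ad.ker) ∧
          ∀ g h k : G, obstr φ a u g h k = cob3 c g h k) ↔
        ∃ (a' : G → A) (u' : G → G → U), LiftPair Ad α a' u' ∧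
          ∀ g h k : G,
            u' g h * u' (g * h) k = φ (a' g) (u' h k) * u' g (h * k))) :=
  stmt3_general Ad φ hcomp hfix hcent hAdconj (hnor := hnor) α
end

section
/- Let G be a discrete abelian group and T the circle group. Every 2-cocycle μ ∈ Z²(G, T) determines an alternating bicharacter σ_μ(g,h) := μ(g,h) μ(h,g)⁻¹, and the map μ ↦ σ_μ induces an isomorphism from H²(G, T) onto the group of alternating bicharacters of G when G is free abelian of finite rank. -/
/-!
The commutator form `σ_μ` is biadditive by the cocycle identity, and it vanishes on coboundaries
because they are symmetric. If `σ_μ = 0`, then `μ` is symmetric, so the extension `T ×_μ G`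
defined by `μ` is an abelian group; since `G = ℤⁿ` is projective, the projection onto `G` has an
additive section `s`, and `c = fst ∘ s` exhibits `μ` as a coboundary. Conversely, if `A` is the
matrix `σ(eᵢ, eⱼ)` of an alternating bicharacter `σ` and `U` is its strictly upper triangular part,
then `A = U - Uᵀ`, so `σ = σ_μ` for the bicharacter `μ` with matrix `U`.
-/

/-- An additive 2-cocycle with trivial action. -/
def IsAddCocycle2 {G : Type*} [AddCommGroup G] {T : Type*} [AddCommGroup T]
    (μ : G → G → T) : Prop :=
  ∀ g h k : G, μ h k + μ g (h + k) = μ (g + h) k + μ g h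

/-- An additive 2-coboundary with trivial action. -/
def IsAddCoboundary2 {G : Type*} [AddCommGroup G] {T : Type*} [AddCommGroup T]
    (μ : G → G → T) : Prop :=
  ∃ c : G → T, ∀ g h : G, μ g h = c (g + h) - c g - c h

section

variable {G T : Type*} [AddCommGroup G] [AddCommGroup T] {μ : G → G → T}

theorem IsAddCocycle2.of_biadditive (hl : ∀ g g' h, μ (g + g') h = μ g h + μ g' h)
    (hr : ∀ g h h', μ g (h + h') = μ g h + μ g h') : IsAddCocycle2 μ := by
  intro g h k
  rw [hl, hr]
  abel

theorem IsAddCocycle2.sub_swap_add_left (hμ : IsAddCocycle2 μ) (g g' h : G) :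
    μ (g + g') h - μ h (g + g') = (μ g h - μ h g) + (μ g' h - μ h g') := by
  have e1 := hμ g g' h
  have e2 := hμ h g g'
  have e3 := hμ g h g'
  rw [add_comm h g] at e2
  rw [add_comm h g'] at e3
  linear_combination (norm := abel) e3 - e1 - e2

theorem IsAddCocycle2.sub_swap_add_right (hμ : IsAddCocycle2 μ) (g h h' : G) :
    μ g (h + h') - μ (h + h') g = (μ g h - μ h g) + (μ g h' - μ h' g) := by
  linear_combination (norm := abel) -hμ.sub_swap_add_left h h' g

theorem IsAddCoboundary2.sub_swap_eq_zero (hμ : IsAddCoboundary2 μ) (g h : G) :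
    μ g h - μ h g = 0 := by
  obtain ⟨c, hc⟩ := hμ
  rw [hc, hc, add_comm h g]
  abel

theorem apply_swap_eq_neg_of_alternating {σ : G → G → T}
    (hl : ∀ g g' h, σ (g + g') h = σ g h + σ g' h)
    (hr : ∀ g h h', σ g (h + h') = σ g h + σ g h') (halt : ∀ g, σ g g = 0) (g h : G) :
    σ h g = -σ g h := by
  have := halt (g + h)
  rw [hl, hr, hr, halt, halt] at this
  linear_combination (norm := abel) this

theorem IsAddCocycle2.apply_zero_left (hμ : IsAddCocycle2 μ) (g : G) : μ 0 g = μ 0 0 := by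
  have := hμ 0 0 g
  rw [zero_add, zero_add] at this
  exact add_left_cancel this

@[ext]
structure CocycleExtension (μ : G → G → T) where
  fst : T
  snd : G

namespace CocycleExtension

instance : Add (CocycleExtension μ) := ⟨fun x y => ⟨x.fst + y.fst + μ x.snd y.snd, x.snd + y.snd⟩⟩

-- `μ` need not be normalized, so the neutral element is `(-μ 0 0, 0)` rather than `(0, 0)`.
instance : Zero (CocycleExtension μ) := ⟨⟨-μ 0 0, 0⟩⟩

instance : Neg (CocycleExtension μ) := ⟨fun x => ⟨-x.fst - μ (-x.snd) x.snd - μ 0 0, -x.snd⟩⟩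

theorem fst_add (x y : CocycleExtension μ) : (x + y).fst = x.fst + y.fst + μ x.snd y.snd := rfl

theorem snd_add (x y : CocycleExtension μ) : (x + y).snd = x.snd + y.snd := rfl

theorem fst_zero : (0 : CocycleExtension μ).fst = -μ 0 0 := rfl

theorem snd_zero : (0 : CocycleExtension μ).snd = 0 := rfl

theorem snd_neg (x : CocycleExtension μ) : (-x).snd = -x.snd := rfl

theorem fst_neg (x : CocycleExtension μ) : (-x).fst = -x.fst - μ (-x.snd) x.snd - μ 0 0 := rfl

abbrev addCommGroup (hμ : IsAddCocycle2 μ) (hsymm : ∀ g h, μ g h = μ h g) :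
    AddCommGroup (CocycleExtension μ) :=
  { AddGroup.ofLeftAxioms
      (fun x y z => CocycleExtension.ext
        (by
          simp only [fst_add, snd_add]
          linear_combination (norm := abel) -hμ x.snd y.snd z.snd)
        (add_assoc _ _ _))
      (fun x => CocycleExtension.ext
        (by rw [fst_add, fst_zero, snd_zero, hμ.apply_zero_left x.snd]; abel) (zero_add _))
      (fun x => CocycleExtension.ext
        (by rw [fst_add, fst_neg, snd_neg, fst_zero]; abel) (neg_add_cancel _)) with
    add_comm := fun x y => CocycleExtension.ext
      (by rw [fst_add, fst_add, hsymm]; abel) (add_comm _ _) }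

end CocycleExtension

theorem IsAddCocycle2.isAddCoboundary2_of_symm [Module.Projective ℤ G] (hμ : IsAddCocycle2 μ)
    (hsymm : ∀ g h, μ g h = μ h g) : IsAddCoboundary2 μ := by
  let := CocycleExtension.addCommGroup hμ hsymm
  let π : CocycleExtension μ →ₗ[ℤ] G :=
    (AddMonoidHom.mk' CocycleExtension.snd fun _ _ => rfl).toIntLinearMap
  obtain ⟨s, hs⟩ := Module.projective_lifting_property π LinearMap.id fun g => ⟨⟨0, g⟩, rfl⟩
  have hsnd (g : G) : (s g).snd = g := LinearMap.congr_fun hs g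
  refine ⟨fun g => (s g).fst, fun g h => ?_⟩
  have hfst : (s (g + h)).fst = (s g).fst + (s h).fst + μ (s g).snd (s h).snd :=
    congrArg CocycleExtension.fst (map_add s g h)
  rw [hsnd, hsnd] at hfst
  simp only [hfst]
  abel

end

namespace Matrix

variable {ι T : Type*} [AddCommGroup T]

section Biadditive

variable [Fintype ι]

def toBiadditive (S : Matrix ι ι T) (g h : ι → ℤ) : T := ∑ i, ∑ j, (g i * h j) • S i j

theorem toBiadditive_add_left (S : Matrix ι ι T) (g g' h : ι → ℤ) :
    S.toBiadditive (g + g') h = S.toBiadditive g h + S.toBiadditive g' h := by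
  simp only [toBiadditive, Pi.add_apply, add_mul, add_zsmul, Finset.sum_add_distrib]

theorem toBiadditive_add_right (S : Matrix ι ι T) (g h h' : ι → ℤ) :
    S.toBiadditive g (h + h') = S.toBiadditive g h + S.toBiadditive g h' := by
  simp only [toBiadditive, Pi.add_apply, mul_add, add_zsmul, Finset.sum_add_distrib]

theorem toBiadditive_sub_swap (S : Matrix ι ι T) (g h : ι → ℤ) :
    S.toBiadditive g h - S.toBiadditive h g = (S - Sᵀ).toBiadditive g h := by
  rw [toBiadditive, toBiadditive, Finset.sum_comm (f := fun i j => (h i * g j) • S i j),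
    ← Finset.sum_sub_distrib]
  refine Finset.sum_congr rfl fun i _ => ?_
  rw [← Finset.sum_sub_distrib]
  refine Finset.sum_congr rfl fun j _ => ?_
  rw [mul_comm (h j), sub_apply, transpose_apply, smul_sub]

end Biadditive

def strictUpperPart [LinearOrder ι] (A : Matrix ι ι T) : Matrix ι ι T :=
  of fun i j => if i < j then A i j else 0

theorem strictUpperPart_sub_transpose [LinearOrder ι] {A : Matrix ι ι T}
    (hskew : ∀ i j, A j i = -A i j) (hdiag : ∀ i, A i i = 0) :
    A.strictUpperPart - A.strictUpperPartᵀ = A := by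
  ext i j
  simp only [strictUpperPart, sub_apply, transpose_apply, of_apply]
  rcases lt_trichotomy i j with hij | rfl | hij
  · simp [hij, hij.not_gt]
  · simp [hdiag]
  · simp [hij, hij.not_gt, hskew i j]

end Matrix

section FreeOfFiniteRank

variable {ι T : Type*} [Fintype ι] [AddCommGroup T]

theorem eq_toBiadditive_of_biadditive [DecidableEq ι] {σ : (ι → ℤ) → (ι → ℤ) → T}
    (hl : ∀ g g' h, σ (g + g') h = σ g h + σ g' h)
    (hr : ∀ g h h', σ g (h + h') = σ g h + σ g h') (g h : ι → ℤ) :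
    σ g h = (Matrix.of fun i j => σ (Pi.single i 1) (Pi.single j 1)).toBiadditive g h := by
  let B : (ι → ℤ) →+ (ι → ℤ) →+ T :=
    AddMonoidHom.mk' (fun g => AddMonoidHom.mk' (σ g) (hr g))
      fun g g' => AddMonoidHom.ext fun h => hl g g' h
  calc σ g h = B (∑ i, g i • Pi.single i 1) (∑ j, h j • Pi.single j 1) := by
        rw [← pi_eq_sum_univ', ← pi_eq_sum_univ']; rfl
    _ = _ := by
        simp only [map_sum, map_zsmul, AddMonoidHom.finsetSum_apply, AddMonoidHom.zsmul_apply,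
          Finset.smul_sum, smul_smul, Matrix.toBiadditive, Matrix.of_apply]
        rw [Finset.sum_comm]
        refine Finset.sum_congr rfl fun i _ => Finset.sum_congr rfl fun j _ => ?_
        rw [mul_comm]
        rfl

theorem exists_isAddCocycle2_sub_swap_eq [LinearOrder ι] {σ : (ι → ℤ) → (ι → ℤ) → T}
    (hl : ∀ g g' h, σ (g + g') h = σ g h + σ g' h)
    (hr : ∀ g h h', σ g (h + h') = σ g h + σ g h') (halt : ∀ g, σ g g = 0) :
    ∃ μ : (ι → ℤ) → (ι → ℤ) → T, IsAddCocycle2 μ ∧ ∀ g h, σ g h = μ g h - μ h g := by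
  set A := Matrix.of fun i j => σ (Pi.single i 1) (Pi.single j 1)
  refine ⟨A.strictUpperPart.toBiadditive, .of_biadditive A.strictUpperPart.toBiadditive_add_left
    A.strictUpperPart.toBiadditive_add_right, fun g h => ?_⟩
  have hskew : ∀ i j, A j i = -A i j := fun i j => apply_swap_eq_neg_of_alternating hl hr halt _ _
  rw [Matrix.toBiadditive_sub_swap, Matrix.strictUpperPart_sub_transpose hskew fun i => halt _]
  exact eq_toBiadditive_of_biadditive hl hr g h

end FreeOfFiniteRank

/-- for `G = ℤⁿ` and `T` the circle, `μ ↦ σ_μ` with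
`σ_μ(g,h) = μ(g,h) - μ(h,g)` induces an isomorphism of `H²(G,T)` onto the group of
alternating bicharacters of `G`. -/
theorem stmt5 (n : ℕ) :
    -- σ_μ is an alternating bicharacter:
    (∀ μ : (Fin n → ℤ) → (Fin n → ℤ) → AddCircle (1 : ℝ), IsAddCocycle2 μ →
      (∀ g g' h : Fin n → ℤ,
        μ (g + g') h - μ h (g + g') = (μ g h - μ h g) + (μ g' h - μ h g')) ∧
      (∀ g h h' : Fin n → ℤ,
        μ g (h + h') - μ (h + h') g = (μ g h - μ h g) + (μ g h' - μ h' g)) ∧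
      (∀ g : Fin n → ℤ, μ g g - μ g g = 0)) ∧
    -- coboundaries have trivial σ (so σ descends to H²(G,T)):
    (∀ μ : (Fin n → ℤ) → (Fin n → ℤ) → AddCircle (1 : ℝ), IsAddCoboundary2 μ →
      ∀ g h : Fin n → ℤ, μ g h - μ h g = 0) ∧
    -- injectivity: if σ_μ = 0 then μ is a coboundary:
    (∀ μ : (Fin n → ℤ) → (Fin n → ℤ) → AddCircle (1 : ℝ), IsAddCocycle2 μ →
      (∀ g h : Fin n → ℤ, μ g h - μ h g = 0) → IsAddCoboundary2 μ) ∧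
    -- surjectivity: every alternating bicharacter arises as σ_μ:
    (∀ σ : (Fin n → ℤ) → (Fin n → ℤ) → AddCircle (1 : ℝ),
      (∀ g g' h, σ (g + g') h = σ g h + σ g' h) →
      (∀ g h h', σ g (h + h') = σ g h + σ g h') →
      (∀ g, σ g g = 0) →
      ∃ μ : (Fin n → ℤ) → (Fin n → ℤ) → AddCircle (1 : ℝ), IsAddCocycle2 μ ∧
        ∀ g h, σ g h = μ g h - μ h g) := by
  exact ⟨fun μ hμ => ⟨hμ.sub_swap_add_left, hμ.sub_swap_add_right, fun g => sub_self _⟩,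
    fun μ hμ => hμ.sub_swap_eq_zero,
    fun μ hμ hσ => hμ.isAddCoboundary2_of_symm fun g h => sub_eq_zero.mp (hσ g h),
    fun σ => exists_isAddCocycle2_sub_swap_eq⟩
end

section
/- Let F be a free group and π : F → Q a surjection with kernel R. Then H²(F, A) = 0 for every F-module A, and consequently, for trivial coefficients A, the map (Hom(R, A)^Q) / (restrictions of Hom(F, A)) → H²(Q, A) induced by transgression is an isomorphism (Hopf-type formula in degree 2 for trivial coefficients A). -/
private lemma mul_inv_aux4 {A : Type*} [CommGroup A] (x y z w : A) (h : x * z = y * w) :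
    x * y⁻¹ * z * w⁻¹ = 1 := by
  have h2 : x * y⁻¹ * z * w⁻¹ = (x * z) * (y * w)⁻¹ := by
    rw [mul_inv]
    simp [mul_comm, mul_left_comm, mul_assoc]
  rw [h2, h, mul_inv_cancel]

/-- Carrier for the extension `B ⋊_c F` built from a 2-cocycle `c`. -/
structure ExtC (B G : Type*) where
  fst : B
  snd : G

theorem freeH2 {α B : Type*} [CommGroup B] (ρ : FreeGroup α →* MulAut B)
    (c : FreeGroup α → FreeGroup α → B)
    (hc : ∀ g h k : FreeGroup α,
      ρ g (c h k) * (c (g * h) k)⁻¹ * c g (h * k) * (c g h)⁻¹ = 1) :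
    ∃ b : FreeGroup α → B, ∀ g h : FreeGroup α,
      c g h = ρ g (b h) * (b (g * h))⁻¹ * b g := by
  have key : ∀ g h k : FreeGroup α,
      ρ g (c h k) * c g (h * k) = c (g * h) k * c g h := by
    intro g h k
    have h1 := hc g h k
    have h2 : (ρ g (c h k) * c g (h * k)) * (c (g * h) k * c g h)⁻¹
        = ρ g (c h k) * (c (g * h) k)⁻¹ * c g (h * k) * (c g h)⁻¹ := by
      rw [mul_inv]
      simp [mul_assoc, mul_comm, mul_left_comm]
    rw [h1] at h2
    exact mul_inv_eq_one.mp h2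
  have hρ1 : ∀ x : B, ρ 1 x = x := by
    intro x; rw [map_one ρ]; rfl
  letI : Mul (ExtC B (FreeGroup α)) :=
    ⟨fun x y => ⟨x.fst * ρ x.snd y.fst * c x.snd y.snd, x.snd * y.snd⟩⟩
  letI : One (ExtC B (FreeGroup α)) := ⟨⟨(c 1 1)⁻¹, 1⟩⟩
  letI : Inv (ExtC B (FreeGroup α)) :=
    ⟨fun x => ⟨(c 1 1)⁻¹ * (ρ x.snd⁻¹ x.fst)⁻¹ * (c x.snd⁻¹ x.snd)⁻¹, x.snd⁻¹⟩⟩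
  have hmul : ∀ x y : ExtC B (FreeGroup α),
      x * y = ⟨x.fst * ρ x.snd y.fst * c x.snd y.snd, x.snd * y.snd⟩ := fun _ _ => rfl
  letI : Group (ExtC B (FreeGroup α)) := by
    refine Group.ofLeftAxioms ?_ ?_ ?_
    · rintro ⟨a, g⟩ ⟨a', g'⟩ ⟨a'', g''⟩
      simp only [hmul]
      refine congrArg₂ ExtC.mk ?_ (mul_assoc _ _ _)
      have hk := key g g' g''
      have hm : ρ (g * g') a'' = ρ g (ρ g' a'') := by rw [map_mul ρ]; rfl
      simp only [map_mul, hm]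
      calc a * ρ g a' * c g g' * ρ g (ρ g' a'') * c (g * g') g''
          = a * ρ g a' * ρ g (ρ g' a'') * (c (g * g') g'' * c g g') := by
            simp [mul_assoc, mul_comm, mul_left_comm]
        _ = a * ρ g a' * ρ g (ρ g' a'') * (ρ g (c g' g'') * c g (g' * g'')) := by rw [← hk]
        _ = a * (ρ g a' * ρ g (ρ g' a'') * ρ g (c g' g'')) * c g (g' * g'') := by
            simp [mul_assoc, mul_comm, mul_left_comm]
    · rintro ⟨a, g⟩
      show (⟨(c 1 1)⁻¹ * ρ 1 a * c 1 g, 1 * g⟩ : ExtC B (FreeGroup α)) = ⟨a, g⟩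
      have hc1g : c 1 g = c 1 1 := by
        have := key 1 1 g
        simp only [one_mul, hρ1] at this
        exact mul_left_cancel this
      rw [hρ1, hc1g, one_mul]
      refine congrArg₂ ExtC.mk ?_ rfl
      simp [mul_comm, mul_assoc]
    · rintro ⟨a, g⟩
      show (⟨(c 1 1)⁻¹ * (ρ g⁻¹ a)⁻¹ * (c g⁻¹ g)⁻¹ * ρ g⁻¹ a * c g⁻¹ g, g⁻¹ * g⟩
          : ExtC B (FreeGroup α)) = ⟨(c 1 1)⁻¹, 1⟩
      rw [inv_mul_cancel]
      refine congrArg₂ ExtC.mk ?_ rfl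
      simp [mul_assoc, mul_comm, mul_left_comm]
  let p : ExtC B (FreeGroup α) →* FreeGroup α :=
    { toFun := fun x => x.snd
      map_one' := rfl
      map_mul' := fun _ _ => rfl }
  let φ : FreeGroup α →* ExtC B (FreeGroup α) :=
    FreeGroup.lift fun x => ⟨1, FreeGroup.of x⟩
  have hsec : ∀ w : FreeGroup α, (φ w).snd = w := by
    have : p.comp φ = MonoidHom.id (FreeGroup α) := by
      apply FreeGroup.ext_hom
      intro a
      simp [p, φ]
    intro w
    exact DFunLike.congr_fun this w
  have hb : ∀ g h : FreeGroup α,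
      (φ (g * h)).fst = (φ g).fst * ρ g ((φ h).fst) * c g h := by
    intro g h
    have := map_mul φ g h
    have h2 : (φ (g*h)).fst = ((φ g) * (φ h)).fst := by rw [this]
    rw [hmul] at h2
    simpa [hsec] using h2
  refine ⟨fun g => ((φ g).fst)⁻¹, fun g h => ?_⟩
  rw [map_inv, inv_inv, hb]
  simp [mul_assoc, mul_comm, mul_left_comm]

/-- The kernel-valued "defect" of `w` relative to the section `s`. -/
def ksec {α : Type*} {Q : Type*} [Group Q] (π : FreeGroup α →* Q) (s : Q → FreeGroup α)
    (hs : ∀ q : Q, π (s q) = q) (w : FreeGroup α) : π.ker :=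
  ⟨w * (s (π w))⁻¹, by rw [MonoidHom.mem_ker]; simp [hs]⟩

@[simp] lemma ksec_coe {α : Type*} {Q : Type*} [Group Q] (π : FreeGroup α →* Q)
    (s : Q → FreeGroup α) (hs : ∀ q : Q, π (s q) = q) (w : FreeGroup α) :
    (ksec π s hs w : FreeGroup α) = w * (s (π w))⁻¹ := rfl

/-- Conjugation of a kernel element by an element of the free group. -/
def conjK {α : Type*} {Q : Type*} [Group Q] (π : FreeGroup α →* Q) (f : FreeGroup α)
    (x : π.ker) : π.ker :=
  ⟨f * (x : FreeGroup α) * f⁻¹, by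
    rw [MonoidHom.mem_ker]
    simp [MonoidHom.mem_ker.mp x.2]⟩

@[simp] lemma conjK_coe {α : Type*} {Q : Type*} [Group Q] (π : FreeGroup α →* Q)
    (f : FreeGroup α) (x : π.ker) :
    (conjK π f x : FreeGroup α) = f * (x : FreeGroup α) * f⁻¹ := rfl

/-- for a free group `F`, `H²(F, A) = 0` for every `F`-module `A`; and for
a surjection `π : F → Q` with kernel `R` and trivial coefficients `A`, the transgression
induces an isomorphism `Hom(R,A)^Q / res(Hom(F,A)) ≅ H²(Q, A)`. -/
theorem stmt12 {α : Type*} {Q : Type*} [Group Q] {A : Type*} [CommGroup A]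
    (π : FreeGroup α →* Q) (hπ : Function.Surjective π)
    (s : Q → FreeGroup α) (hs : ∀ q : Q, π (s q) = q) (hs1 : s 1 = 1)
    (nf : Q → Q → π.ker)
    (hnf : ∀ p q : Q, ((nf p q : π.ker) : FreeGroup α) = s p * s q * (s (p * q))⁻¹) :
    -- H²(F, B) = 0 for every F-module B (B an abelian group with an F-action ρ):
    (∀ (B : Type*) (_ : CommGroup B) (ρ : FreeGroup α →* MulAut B)
      (c : FreeGroup α → FreeGroup α → B),
      (∀ g h k : FreeGroup α,
        ρ g (c h k) * (c (g * h) k)⁻¹ * c g (h * k) * (c g h)⁻¹ = 1) →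
      ∃ b : FreeGroup α → B, ∀ g h : FreeGroup α,
        c g h = ρ g (b h) * (b (g * h))⁻¹ * b g) ∧
    -- the transgression of an invariant hom χ : R → A is a 2-cocycle on Q:
    (∀ χ : π.ker →* A,
      (∀ (r : π.ker) (f : FreeGroup α), χ ⟨f⁻¹ * (r : FreeGroup α) * f, by
          simpa using π.normal_ker.conj_mem (↑r) r.2 f⁻¹⟩ = χ r) →
      IsCocycle2 (fun p q => χ (nf p q))) ∧
    -- injectivity: the transgression of χ is a coboundary iff χ extends to F:
    (∀ χ : π.ker →* A,
      (∀ (r : π.ker) (f : FreeGroup α), χ ⟨f⁻¹ * (r : FreeGroup α) * f, by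
          simpa using π.normal_ker.conj_mem (↑r) r.2 f⁻¹⟩ = χ r) →
      ((∃ b : Q → A, ∀ p q : Q, χ (nf p q) = b q * (b (p * q))⁻¹ * b p) ↔
        ∃ f : FreeGroup α →* A, ∀ r : π.ker, f (r : FreeGroup α) = χ r)) ∧
    -- surjectivity: every 2-cocycle on Q is, modulo a coboundary, a transgression:
    (∀ c : Q → Q → A, IsCocycle2 c →
      ∃ χ : π.ker →* A,
        (∀ (r : π.ker) (f : FreeGroup α), χ ⟨f⁻¹ * (r : FreeGroup α) * f, by
          simpa using π.normal_ker.conj_mem (↑r) r.2 f⁻¹⟩ = χ r) ∧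
        ∃ b : Q → A, ∀ p q : Q,
          c p q = χ (nf p q) * (b q * (b (p * q))⁻¹ * b p)) := by
  -- a convenient reformulation of the invariance hypothesis
  have hconj : ∀ χ : π.ker →* A,
      (∀ (r : π.ker) (f : FreeGroup α), χ ⟨f⁻¹ * (r : FreeGroup α) * f, by
          simpa using π.normal_ker.conj_mem (↑r) r.2 f⁻¹⟩ = χ r) →
      ∀ (x : π.ker) (f : FreeGroup α), χ (conjK π f x) = χ x := by
    intro χ hχ x f
    have h1 := hχ x f⁻¹
    have h2 : conjK π f x = ⟨f⁻¹⁻¹ * (x : FreeGroup α) * f⁻¹, by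
        simpa using π.normal_ker.conj_mem (↑x) x.2 f⁻¹⁻¹⟩ := by
      apply Subtype.ext
      simp
    rw [h2]
    exact h1
  refine ⟨?_, ?_, ?_, ?_⟩
  · -- Part 1
    intro B hB ρ c hc
    exact @freeH2 α B hB ρ c hc
  · -- Part 2: transgression is a cocycle
    intro χ hχ p q r
    have hcj := hconj χ hχ
    have e1 : conjK π (s p) (nf q r) * nf p (q * r) = nf p q * nf (p * q) r := by
      apply Subtype.ext
      simp only [Subgroup.coe_mul, conjK_coe, hnf]
      rw [mul_assoc p q r]
      group
    have e2 := congrArg χ e1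
    rw [map_mul, map_mul, hcj (nf q r) (s p)] at e2
    show χ (nf q r) * χ (nf p (q * r)) = χ (nf (p * q) r) * χ (nf p q)
    rw [e2, mul_comm]
  · -- Part 3
    intro χ hχ
    have hcj := hconj χ hχ
    constructor
    · rintro ⟨b, hb⟩
      have hnf11 : nf 1 1 = 1 := by
        apply Subtype.ext
        rw [hnf]
        simp [hs1]
      have hb1 : b 1 = 1 := by
        have h0 := hb 1 1
        rw [hnf11, map_one] at h0
        simp only [mul_one] at h0
        simpa using h0.symm
      refine ⟨{ toFun := fun w => χ (ksec π s hs w) * b (π w)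
                map_one' := ?_
                map_mul' := ?_ }, ?_⟩
      · have h1 : ksec π s hs 1 = 1 := by
          apply Subtype.ext
          simp [hs1]
        show χ (ksec π s hs 1) * b (π 1) = 1
        rw [h1, map_one, map_one π, hb1, mul_one]
      · intro v w
        have e : ksec π s hs (v * w)
            = ksec π s hs v * conjK π (s (π v)) (ksec π s hs w) * nf (π v) (π w) := by
          apply Subtype.ext
          simp only [Subgroup.coe_mul, ksec_coe, conjK_coe, hnf, map_mul]
          group
        show χ (ksec π s hs (v * w)) * b (π (v * w))
            = χ (ksec π s hs v) * b (π v) * (χ (ksec π s hs w) * b (π w))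
        rw [e, map_mul, map_mul, hcj (ksec π s hs w) (s (π v)), hb (π v) (π w), map_mul π]
        simp [mul_comm, mul_left_comm, mul_assoc]
      · intro r
        show χ (ksec π s hs ↑r) * b (π ↑r) = χ r
        have h1 : ksec π s hs ↑r = r := by
          apply Subtype.ext
          simp [MonoidHom.mem_ker.mp r.2, hs1]
        rw [h1, MonoidHom.mem_ker.mp r.2, hb1, mul_one]
    · rintro ⟨f, hf⟩
      refine ⟨fun q => f (s q), fun p q => ?_⟩
      rw [← hf (nf p q), hnf]
      rw [map_mul, map_mul, map_inv]
      simp [mul_comm, mul_left_comm, mul_assoc]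
  · -- Part 4: surjectivity
    intro c hQ
    have hcoc' : ∀ g h k : FreeGroup α,
        (1 : FreeGroup α →* MulAut A) g (c (π h) (π k)) * (c (π (g * h)) (π k))⁻¹
          * c (π g) (π (h * k)) * (c (π g) (π h))⁻¹ = 1 := by
      intro g h k
      simp only [MonoidHom.one_apply, MulAut.one_apply, map_mul]
      exact mul_inv_aux4 _ _ _ _ (hQ (π g) (π h) (π k))
    obtain ⟨b, hb0⟩ := freeH2 (1 : FreeGroup α →* MulAut A) (fun g h => c (π g) (π h)) hcoc'
    have hb : ∀ g h : FreeGroup α, c (π g) (π h) = b h * (b (g * h))⁻¹ * b g := by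
      intro g h
      simpa using hb0 g h
    have hb1 : b 1 = c 1 1 := by
      have h0 := hb 1 1
      rw [map_one π] at h0
      simp only [mul_one] at h0
      simpa using h0.symm
    have hbmul : ∀ g h : FreeGroup α, b (g * h) = b g * b h * (c (π g) (π h))⁻¹ := by
      intro g h
      rw [hb g h]
      apply Additive.ofMul.injective
      simp only [ofMul_mul, ofMul_inv]
      abel
    have hcp1 : ∀ p : Q, c p 1 = c 1 1 := by
      intro p
      have h0 := hQ p 1 1
      simp only [mul_one, one_mul] at h0
      exact (mul_right_cancel h0).symm
    have hbinv : ∀ f : FreeGroup α, b f * b f⁻¹ * (c (π f) (π f)⁻¹)⁻¹ = b 1 := by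
      intro f
      have h0 := hbmul f f⁻¹
      rw [mul_inv_cancel, map_inv] at h0
      exact h0.symm
    have key : ∀ (x : π.ker) (g : FreeGroup α), b (g * ↑x * g⁻¹) = b ↑x := by
      intro x g
      have e1 : b (g * ↑x * g⁻¹)
          = b (g * ↑x) * b g⁻¹ * (c (π (g * ↑x)) (π g⁻¹))⁻¹ := hbmul _ _
      rw [hbmul g ↑x] at e1
      simp only [map_mul, map_inv, MonoidHom.mem_ker.mp x.2, mul_one] at e1
      rw [hcp1] at e1
      calc b (g * ↑x * g⁻¹)
          = b ↑x * (c 1 1)⁻¹ * (b g * b g⁻¹ * (c (π g) (π g)⁻¹)⁻¹) := by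
            rw [e1]
            simp [mul_comm, mul_left_comm, mul_assoc]
        _ = b ↑x := by rw [hbinv, hb1]; simp
    refine ⟨{ toFun := fun r => (b ↑r)⁻¹ * c 1 1
              map_one' := by simp [hb1]
              map_mul' := ?_ }, ?_, ?_⟩
    · intro x y
      show (b ↑(x * y))⁻¹ * c 1 1 = ((b ↑x)⁻¹ * c 1 1) * ((b ↑y)⁻¹ * c 1 1)
      rw [Subgroup.coe_mul, hbmul ↑x ↑y, MonoidHom.mem_ker.mp x.2, MonoidHom.mem_ker.mp y.2]
      simp [mul_inv, mul_comm, mul_left_comm, mul_assoc]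
    · intro r f
      show (b (f⁻¹ * ↑r * f))⁻¹ * c 1 1 = (b ↑r)⁻¹ * c 1 1
      have h1 := key r f⁻¹
      rw [inv_inv] at h1
      rw [h1]
    · refine ⟨fun q => b (s q), fun p q => ?_⟩
      show c p q = (b ↑(nf p q))⁻¹ * c 1 1 * (b (s q) * (b (s (p * q)))⁻¹ * b (s p))
      rw [hnf]
      have h2 : b ((s (p * q))⁻¹) = b 1 * c (p * q) (p * q)⁻¹ * (b (s (p * q)))⁻¹ := by
        have h3 := hbinv (s (p * q))
        rw [hs] at h3
        rw [← h3]
        simp [mul_comm, mul_left_comm, mul_assoc]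
      have h1 : b (s p * s q * (s (p * q))⁻¹)
          = b (s p) * b (s q) * (c p q)⁻¹ * b 1 * (b (s (p * q)))⁻¹ := by
        rw [hbmul (s p * s q) (s (p * q))⁻¹, hbmul (s p) (s q)]
        simp only [map_mul, map_inv, hs]
        rw [h2]
        apply Additive.ofMul.injective
        simp only [ofMul_mul, ofMul_inv]
        abel
      rw [h1, hb1]
      apply Additive.ofMul.injective
      simp only [ofMul_mul, ofMul_inv]
      abel
end

section
/- Let G = ℤ/nℤ and T the circle group. Then H³(G, T) ≅ ℤ/nℤ. Explicitly, for each k ∈ ℤ the function c_k(a, b, c) := exp(2πi k ā (b̄ + c̄ − (b+c)‾)/n²) (where x̄ denotes the representative of x in {0,…,n−1}) is a 3-cocycle, and k ↦ [c_k] induces the isomorphism ℤ/n ≅ H³(ℤ/n, T). -/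
/-- An additive 3-cocycle with trivial action. -/
def IsAddCocycle3 {G : Type*} [AddGroup G] {T : Type*} [AddCommGroup T]
    (f : G → G → G → T) : Prop :=
  ∀ g h k l : G,
    f h k l - f (g + h) k l + f g (h + k) l - f g h (k + l) + f g h k = 0

/-- The additive coboundary of `b : G × G → T` (trivial action). -/
def addD2 {G : Type*} [AddGroup G] {T : Type*} [AddCommGroup T] (b : G → G → T) :
    G → G → G → T :=
  fun g h k => b h k - b (g + h) k + b g (h + k) - b g h

/-- The explicit 3-cocycle `c_k(a,b,c) = k ā (b̄ + c̄ − (b+c)‾)/n²` on `ℤ/n` with values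
in the circle `ℝ/ℤ`. -/
noncomputable def ck (n : ℕ) (k : ℤ) : ZMod n → ZMod n → ZMod n → AddCircle (1 : ℝ) :=
  fun a b c =>
    (((k : ℝ) * (a.val : ℝ) * ((b.val : ℝ) + (c.val : ℝ) - ((b + c).val : ℝ)) /
        (n ^ 2 : ℝ) : ℝ) : AddCircle (1 : ℝ))

/-!
Write `x̄` for the representative of `x : ℤ/n` in `{0, …, n-1}` and
`carry x y = (x̄ + ȳ) / n ∈ {0, 1}`, an integral 2-cocycle with `(x + y)‾ = x̄ + ȳ - n carry x y`.
Then `c_k(a, b, c) = k ā carry(b, c) / n`, whose coboundary `k carry ∪ carry` is integral, so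
`c_k` is a cocycle, and `c_k = 0` once `n ∣ k`. A coboundary summed over its middle variable
vanishes, while `∑ₕ c_k(1, h, 1) = k / n`; so `c_k` is a coboundary only if `n ∣ k`.

Conversely, telescoping the cocycle identity of `f` along `a ↦ a + 1` shows that `f` is
cohomologous to `carry(a, b) • N(c)`, where `N(c) = ∑ₕ f(1, h, c)` is additive by the cocycle
identity. Hence `N(c) = c̄ m / n` for some `m`, and `carry(a, b) c̄ / n` differs from
`ā carry(b, c) / n` by the coboundary of `(a, b) ↦ ā b̄ / n²`.
-/

open Finset

section Coboundary

variable {G T : Type*} [AddGroup G] [AddCommGroup T]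

@[simp] lemma addD2_zero (g h k : G) : addD2 (0 : G → G → T) g h k = 0 := by
  simp [addD2]

lemma addD2_add (b₁ b₂ : G → G → T) (g h k : G) :
    addD2 (b₁ + b₂) g h k = addD2 b₁ g h k + addD2 b₂ g h k := by
  simp only [addD2, Pi.add_apply]
  abel

lemma sum_addD2_middle [Fintype G] (b : G → G → T) (g k : G) : ∑ h, addD2 b g h k = 0 := by
  have hleft : ∑ h, b (g + h) k = ∑ h, b h k :=
    Fintype.sum_equiv (Equiv.addLeft g) _ _ fun _ => rfl
  have hright : ∑ h, b g (h + k) = ∑ h, b g h :=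
    Fintype.sum_equiv (Equiv.addRight k) _ _ fun _ => rfl
  simp only [addD2, sum_add_distrib, sum_sub_distrib, hleft, hright]
  abel

lemma IsAddCocycle3.apply_add_left_sub {f : G → G → G → T} (hf : IsAddCocycle3 f)
    (g h k l : G) : f (g + h) k l - f h k l = f g (h + k) l - f g h (k + l) + f g h k := by
  rw [← sub_eq_zero, ← neg_eq_zero, ← hf g h k l]
  abel

lemma IsAddCocycle3.apply_zero_left {f : G → G → G → T} (hf : IsAddCocycle3 f) (k l : G) :
    f 0 k l = f 0 0 (k + l) - f 0 0 k := by
  have h := hf.apply_add_left_sub 0 0 k l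
  rw [add_zero, zero_add, sub_self] at h
  rw [← sub_eq_zero, h]
  abel

lemma IsAddCocycle3.sum_middle_add [Fintype G] {f : G → G → G → T} (hf : IsAddCocycle3 f)
    (g k l : G) : ∑ h, f g h (k + l) = ∑ h, f g h k + ∑ h, f g h l := by
  have hleft : ∑ h, f (g + h) k l = ∑ h, f h k l :=
    Fintype.sum_equiv (Equiv.addLeft g) _ _ fun _ => rfl
  have hright : ∑ h, f g (h + k) l = ∑ h, f g h l :=
    Fintype.sum_equiv (Equiv.addRight k) _ _ fun _ => rfl
  have hsum := Finset.sum_congr rfl fun h (_ : h ∈ univ) => hf.apply_add_left_sub g h k l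
  simp only [sum_add_distrib, sum_sub_distrib, hleft, hright, sub_self] at hsum
  rw [← sub_eq_zero, ← neg_eq_zero, hsum]
  abel

end Coboundary

namespace ZMod

variable {n : ℕ} [NeZero n]

def carry (x y : ZMod n) : ℕ := (x.val + y.val) / n

lemma val_add_add_mul_carry (x y : ZMod n) : (x + y).val + n * carry x y = x.val + y.val := by
  rw [val_add, carry, Nat.mod_add_div]

lemma carry_add_carry (h k l : ZMod n) :
    carry h k + carry (h + k) l = carry k l + carry h (k + l) := by
  have h₁ := val_add_add_mul_carry h k
  have h₂ := val_add_add_mul_carry (h + k) l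
  have h₃ := val_add_add_mul_carry k l
  have h₄ := val_add_add_mul_carry h (k + l)
  rw [← add_assoc] at h₄
  refine Nat.eq_of_mul_eq_mul_left (NeZero.pos n) ?_
  linarith

lemma sum_range_natCast {M : Type*} [AddCommMonoid M] (F : ZMod n → M) :
    ∑ j ∈ range n, F j = ∑ x, F x :=
  sum_nbij' (fun j => (j : ZMod n)) val (fun _ _ => mem_univ _)
    (fun x _ => mem_range.2 x.val_lt) (fun _ hj => val_cast_of_lt (mem_range.1 hj))
    (fun x _ => natCast_zmod_val x) fun _ _ => rfl

lemma sum_carry (y : ZMod n) : ∑ x, carry x y = y.val := by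
  have hshift : ∑ x, (x + y).val = ∑ x : ZMod n, x.val :=
    Fintype.sum_equiv (Equiv.addRight y) _ _ fun _ => rfl
  have hsum := Finset.sum_congr rfl fun x (_ : x ∈ univ) => val_add_add_mul_carry x y
  rw [sum_add_distrib, sum_add_distrib, hshift, ← mul_sum, sum_const, card_univ, card,
    smul_eq_mul] at hsum
  exact Nat.eq_of_mul_eq_mul_left (NeZero.pos n) (by omega)

end ZMod

section CyclicCocycles

variable {n : ℕ} [NeZero n] {T : Type*} [AddCommGroup T]

def partialSumAtOne (f : ZMod n → ZMod n → ZMod n → T) (r : ℕ) (y : ZMod n) : T :=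
  ∑ j ∈ range r, f 1 j y

lemma partialSumAtOne_mul_add (f : ZMod n → ZMod n → ZMod n → T) (q s : ℕ) (y : ZMod n) :
    partialSumAtOne f (n * q + s) y = q • ∑ h, f 1 h y + partialSumAtOne f s y := by
  induction q with
  | zero => simp
  | succ q ih =>
    have hshift : ∑ j ∈ range (n * q + s), f 1 ((n + j : ℕ) : ZMod n) y =
        partialSumAtOne f (n * q + s) y := by
      simp [partialSumAtOne]
    rw [show n * (q + 1) + s = n + (n * q + s) by ring, partialSumAtOne, sum_range_add,
      ZMod.sum_range_natCast (fun j => f 1 j y), hshift, ih, succ_nsmul]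
    abel

lemma partialSumAtOne_val_add_val (f : ZMod n → ZMod n → ZMod n → T) (x k y : ZMod n) :
    partialSumAtOne f (x.val + k.val) y =
      ZMod.carry x k • ∑ h, f 1 h y + partialSumAtOne f (x + k).val y := by
  rw [← partialSumAtOne_mul_add, ZMod.val_add, ZMod.carry, Nat.div_add_mod]

lemma IsAddCocycle3.eq_carry_smul_add_addD2 {f : ZMod n → ZMod n → ZMod n → T}
    (hf : IsAddCocycle3 f) (x k l : ZMod n) :
    f x k l = ZMod.carry x k • ∑ h, f 1 h l +
      addD2 (fun x y => f 0 0 y - partialSumAtOne f x.val y) x k l := by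
  have htelescope : f x k l =
      f 0 k l + ∑ j ∈ range x.val, (f 1 (j + k) l - f 1 j (k + l) + f 1 j k) := by
    conv_lhs => rw [← ZMod.natCast_zmod_val x]
    rw [eq_sum_range_sub (fun m : ℕ => f m k l), Nat.cast_zero]
    refine congrArg _ (sum_congr rfl fun j _ => ?_)
    rw [Nat.cast_succ, add_comm, hf.apply_add_left_sub]
  have hshift : ∑ j ∈ range x.val, f 1 (j + k) l =
      partialSumAtOne f (k.val + x.val) l - partialSumAtOne f k.val l := by
    rw [partialSumAtOne, partialSumAtOne, sum_range_add, add_sub_cancel_left]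
    refine sum_congr rfl fun j _ => ?_
    rw [Nat.cast_add, ZMod.natCast_zmod_val, add_comm]
  rw [htelescope, sum_add_distrib, sum_sub_distrib, hshift, add_comm k.val,
    partialSumAtOne_val_add_val, hf.apply_zero_left]
  simp only [addD2, partialSumAtOne]
  abel

end CyclicCocycles

section Circle

local notation "𝕋" => AddCircle (1 : ℝ)

noncomputable def intDivCircle (n : ℕ) : ℤ →+ 𝕋 :=
  AddMonoidHom.mk' (fun z => ((z / n : ℝ) : 𝕋)) fun a b => by
    rw [Int.cast_add, add_div, AddCircle.coe_add]

variable {n : ℕ}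

lemma intDivCircle_apply (z : ℤ) : intDivCircle n z = ((z / n : ℝ) : 𝕋) := rfl

variable [NeZero n]

lemma intDivCircle_eq_zero_iff (z : ℤ) : intDivCircle n z = 0 ↔ (n : ℤ) ∣ z := by
  have hn : (n : ℝ) ≠ 0 := Nat.cast_ne_zero.2 (NeZero.ne n)
  simp only [intDivCircle_apply, AddCircle.coe_eq_zero_iff, zsmul_eq_mul, mul_one, eq_div_iff hn]
  constructor
  · rintro ⟨m, hm⟩
    exact ⟨m, by exact_mod_cast (by linarith : (z : ℝ) = n * m)⟩
  · rintro ⟨m, rfl⟩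
    exact ⟨m, by push_cast; ring⟩

lemma ck_eq_intDivCircle (k : ℤ) (a b c : ZMod n) :
    ck n k a b c = intDivCircle n (k * a.val * ZMod.carry b c) := by
  have hn : (n : ℝ) ≠ 0 := Nat.cast_ne_zero.2 (NeZero.ne n)
  have hval : ((b + c).val : ℝ) + n * ZMod.carry b c = b.val + c.val := by
    exact_mod_cast ZMod.val_add_add_mul_carry b c
  rw [ck, intDivCircle_apply]
  congr 1
  push_cast
  field_simp
  linear_combination (-(k * a.val)) * hval

lemma ck_add (j k : ℤ) (a b c : ZMod n) : ck n (j + k) a b c = ck n j a b c + ck n k a b c := by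
  simp only [ck_eq_intDivCircle, add_mul, map_add]

lemma isAddCocycle3_ck (k : ℤ) : IsAddCocycle3 (ck n k) := by
  intro g h k' l
  simp only [ck_eq_intDivCircle, ← map_sub, ← map_add, intDivCircle_eq_zero_iff]
  refine ⟨k * ZMod.carry g h * ZMod.carry k' l, ?_⟩
  have hval : ((g + h).val : ℤ) + n * ZMod.carry g h = g.val + h.val := by
    exact_mod_cast ZMod.val_add_add_mul_carry g h
  have hcarry : (ZMod.carry h k' + ZMod.carry (h + k') l : ℤ) =
      ZMod.carry k' l + ZMod.carry h (k' + l) := by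
    exact_mod_cast ZMod.carry_add_carry h k' l
  linear_combination (-k * ZMod.carry k' l) * hval + (k * g.val) * hcarry

lemma exists_ck_eq_addD2_iff (k : ℤ) :
    (∃ b : ZMod n → ZMod n → 𝕋, ∀ a b' c, ck n k a b' c = addD2 b a b' c) ↔ (n : ℤ) ∣ k := by
  constructor
  · rintro ⟨b, hb⟩
    rcases eq_or_ne n 1 with rfl | hn1
    · exact Nat.cast_one (R := ℤ) ▸ one_dvd k
    have hsum : ∑ h, ck n k 1 h 1 = intDivCircle n k := by
      simp only [ck_eq_intDivCircle, ← map_sum, ← mul_sum, ← Nat.cast_sum, ZMod.sum_carry,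
        ZMod.val_one'' hn1, Nat.cast_one, mul_one]
    rw [← intDivCircle_eq_zero_iff, ← hsum]
    simp only [hb]
    exact sum_addD2_middle b 1 1
  · intro hk
    refine ⟨0, fun a b c => ?_⟩
    rw [addD2_zero, ck_eq_intDivCircle, intDivCircle_eq_zero_iff]
    exact (hk.mul_right _).mul_right _

lemma carry_mul_val_smul_eq_ck_add_addD2 (m : ℤ) (x y z : ZMod n) :
    (ZMod.carry x y * z.val) • ((m / n : ℝ) : 𝕋) =
      ck n m x y z + addD2 (fun a b => ((m * a.val * b.val / n ^ 2 : ℝ) : 𝕋)) x y z := by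
  have hn : (n : ℝ) ≠ 0 := Nat.cast_ne_zero.2 (NeZero.ne n)
  have hval : ((x + y).val : ℝ) + n * ZMod.carry x y = x.val + y.val := by
    exact_mod_cast ZMod.val_add_add_mul_carry x y
  simp only [ck, addD2, ← AddCircle.coe_nsmul, ← AddCircle.coe_add, ← AddCircle.coe_sub]
  congr 1
  rw [nsmul_eq_mul]
  push_cast
  field_simp
  linear_combination (m * z.val) * hval

lemma IsAddCocycle3.exists_eq_ck_add_addD2 {f : ZMod n → ZMod n → ZMod n → 𝕋}
    (hf : IsAddCocycle3 f) :
    ∃ (k : ℤ) (b : ZMod n → ZMod n → 𝕋), ∀ x y z, f x y z = ck n k x y z + addD2 b x y z := by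
  let N : ZMod n →+ 𝕋 := AddMonoidHom.mk' (fun y => ∑ h, f 1 h y) (hf.sum_middle_add 1)
  have hN : ∀ z : ZMod n, N z = z.val • N 1 := fun z => by
    rw [← map_nsmul, nsmul_one, ZMod.natCast_zmod_val]
  have hN1 : n • N 1 = 0 := by rw [← map_nsmul, nsmul_one, ZMod.natCast_self, map_zero]
  obtain ⟨m, -, hm⟩ := (AddCircle.nsmul_eq_zero_iff (NeZero.pos n)).1 hN1
  refine ⟨m, (fun x y => f 0 0 y - partialSumAtOne f x.val y) +
    fun x y => (((m : ℤ) * x.val * y.val / n ^ 2 : ℝ) : 𝕋), fun x y z => ?_⟩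
  have hcarry : ZMod.carry x y • ∑ h, f 1 h z =
      ck n m x y z + addD2 (fun a b => (((m : ℤ) * a.val * b.val / n ^ 2 : ℝ) : 𝕋)) x y z := by
    rw [← carry_mul_val_smul_eq_ck_add_addD2, mul_smul, Int.cast_natCast, ← mul_one (m / n : ℝ),
      hm]
    exact congrArg _ (hN z)
  rw [hf.eq_carry_smul_add_addD2, hcarry, addD2_add]
  abel

end Circle

/-- `H³(ℤ/n, 𝕋) ≅ ℤ/n`, realized by the explicit cocycles `c_k`. -/
theorem stmt14 (n : ℕ) [NeZero n] :
    -- each c_k is a 3-cocycle: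
    (∀ k : ℤ, IsAddCocycle3 (ck n k)) ∧
    -- c_k is a coboundary iff n ∣ k (injectivity of k ↦ [c_k] on ℤ/n):
    (∀ k : ℤ, (∃ b : ZMod n → ZMod n → AddCircle (1 : ℝ),
        ∀ a b' c : ZMod n, ck n k a b' c = addD2 b a b' c) ↔ (n : ℤ) ∣ k) ∧
    -- additivity in k up to coboundary (so k ↦ [c_k] is a homomorphism):
    (∀ j k : ℤ, ∃ b : ZMod n → ZMod n → AddCircle (1 : ℝ),
      ∀ a b' c : ZMod n,
        ck n (j + k) a b' c = ck n j a b' c + ck n k a b' c + addD2 b a b' c) ∧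
    -- surjectivity: every 3-cocycle is cohomologous to some c_k:
    (∀ f : ZMod n → ZMod n → ZMod n → AddCircle (1 : ℝ), IsAddCocycle3 f →
      ∃ (k : ℤ) (b : ZMod n → ZMod n → AddCircle (1 : ℝ)),
        ∀ a b' c : ZMod n, f a b' c = ck n k a b' c + addD2 b a b' c) :=
  ⟨isAddCocycle3_ck, exists_ck_eq_addD2_iff,
    fun j k => ⟨0, fun a b c => by rw [addD2_zero, add_zero, ck_add]⟩,
    fun _ hf => hf.exists_eq_ck_add_addD2⟩
end
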